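/- Let F be a crossing biset-family on V. Then Δ(C(F)) ≤ ν(F̄), i.e., the maximum number of cores of F whose inner parts share a common element is at most the maximum number of members of the reverse family F̄ with pairwise-disjoint inner parts. -/
import Mathlib


open Finset
open scoped Classical

/-- A biset on ground set `V` is a pair `(X, X⁺)` with `X ⊆ X⁺ ⊆ V`. -/
def IsBisetOn {α : Type*} (V : Finset α) (A : Finset α × Finset α) : Prop :=
  A.1 ⊆ A.2 ∧ A.2 ⊆ V

/-- Crossing biset-family. -/
def Crossing {α : Type*} [DecidableEq α] (V : Finset α)
    (F : Finset (Finset α × Finset α)) : Prop :=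
  ∀ A ∈ F, ∀ B ∈ F, (A.1 ∩ B.1).Nonempty → ((V \ A.2) ∩ (V \ B.2)).Nonempty →
    (A.1 ∩ B.1, A.2 ∩ B.2) ∈ F ∧ (A.1 ∪ B.1, A.2 ∪ B.2) ∈ F

/-- Containment order on bisets. -/
def BisetLE {α : Type*} [DecidableEq α] (A B : Finset α × Finset α) : Prop :=
  A.1 ⊂ B.1 ∨ (A.1 = B.1 ∧ A.2 ⊆ B.2)

/-- A core of `F` is an inclusion-minimal member of `F`. -/
def IsCore {α : Type*} [DecidableEq α] (F : Finset (Finset α × Finset α))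
    (A : Finset α × Finset α) : Prop :=
  A ∈ F ∧ ∀ B ∈ F, BisetLE B A → B = A

/-- The reverse family `F̄ = {(V \ X⁺, V \ X) : (X,X⁺) ∈ F}`. -/
def revFam {α : Type*} [DecidableEq α] (V : Finset α)
    (F : Finset (Finset α × Finset α)) : Finset (Finset α × Finset α) :=
  F.image fun A => (V \ A.2, V \ A.1)

/-- `ν`: the maximum number of bisets in the family with pairwise-disjoint inner parts. -/
noncomputable def nuBiset {α : Type*} [DecidableEq α]
    (F : Finset (Finset α × Finset α)) : ℕ :=
  F.powerset.sup fun G =>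
    if (G : Set (Finset α × Finset α)).Pairwise (fun A B => Disjoint A.1 B.1)
    then G.card else 0

/-- `Δ(C(F)) ≤ ν(F̄)`: for a crossing biset-family `F`, the number of cores of `F`
whose inner parts share a common element `v` is at most the maximum number of
members of the reverse family with pairwise-disjoint inner parts. -/
theorem stmt_4 {α : Type*} [DecidableEq α] (V : Finset α)
    (F : Finset (Finset α × Finset α))
    (hB : ∀ A ∈ F, IsBisetOn V A) (hcross : Crossing V F)
    (v : α) (G : Finset (Finset α × Finset α))
    (hG : ∀ A ∈ G, IsCore F A ∧ v ∈ A.1) :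
    G.card ≤ nuBiset (revFam V F) := by
  classical
  have hGF : ∀ A ∈ G, A ∈ F := fun A hA => ((hG A hA).1).1
  set f : Finset α × Finset α → Finset α × Finset α := fun A => (V \ A.2, V \ A.1) with hf
  -- key: distinct cores in G have disjoint reverse inner parts
  have key : ∀ A ∈ G, ∀ B ∈ G, A ≠ B → Disjoint (V \ A.2) (V \ B.2) := by
    intro A hA B hB hne
    by_contra hnd
    rw [Finset.disjoint_left] at hnd
    push_neg at hnd
    obtain ⟨x, hx1, hx2⟩ := hnd
    have hcr := hcross A (hGF A hA) B (hGF B hB)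
      ⟨v, Finset.mem_inter.mpr ⟨(hG A hA).2, (hG B hB).2⟩⟩
      ⟨x, Finset.mem_inter.mpr ⟨hx1, hx2⟩⟩
    have hI : (A.1 ∩ B.1, A.2 ∩ B.2) ∈ F := hcr.1
    have hLA : BisetLE (A.1 ∩ B.1, A.2 ∩ B.2) A := by
      rcases (Finset.inter_subset_left (s₁ := A.1) (s₂ := B.1)).ssubset_or_eq with h | h
      · exact Or.inl h
      · exact Or.inr ⟨h, Finset.inter_subset_left⟩
    have hLB : BisetLE (A.1 ∩ B.1, A.2 ∩ B.2) B := by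
      rcases (Finset.inter_subset_right (s₁ := A.1) (s₂ := B.1)).ssubset_or_eq with h | h
      · exact Or.inl h
      · exact Or.inr ⟨h, Finset.inter_subset_right⟩
    have hA' := ((hG A hA).1).2 _ hI hLA
    have hB' := ((hG B hB).1).2 _ hI hLB
    exact hne (hA'.symm.trans hB')
  have hinj : Set.InjOn f G := by
    intro A hAm B hBm h
    by_contra hne
    have hd := key A hAm B hBm hne
    have hbA := hB A (hGF A hAm)
    have hbB := hB B (hGF B hBm)
    have h1 : V \ A.2 = V \ B.2 := congrArg Prod.fst h
    have h2 : V \ A.1 = V \ B.1 := congrArg Prod.snd h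
    have heq2 : A.2 = B.2 := by
      have := congrArg (fun s => V \ s) h1
      simpa [Finset.sdiff_sdiff_self_left, Finset.inter_eq_right.mpr hbA.2,
        Finset.inter_eq_right.mpr hbB.2] using this
    have heq1 : A.1 = B.1 := by
      have := congrArg (fun s => V \ s) h2
      simpa [Finset.sdiff_sdiff_self_left,
        Finset.inter_eq_right.mpr (hbA.1.trans hbA.2),
        Finset.inter_eq_right.mpr (hbB.1.trans hbB.2)] using this
    exact hne (Prod.ext heq1 heq2)
  have hsub : G.image f ⊆ revFam V F := by
    intro x hx
    obtain ⟨A, hA, rfl⟩ := Finset.mem_image.mp hx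
    exact Finset.mem_image.mpr ⟨A, hGF A hA, rfl⟩
  have hdisj : ((G.image f) : Set (Finset α × Finset α)).Pairwise
      (fun A B => Disjoint A.1 B.1) := by
    intro x hx y hy hxy
    obtain ⟨A, hA, rfl⟩ := Finset.mem_image.mp (Finset.mem_coe.mp hx)
    obtain ⟨B, hBm, rfl⟩ := Finset.mem_image.mp (Finset.mem_coe.mp hy)
    have : A ≠ B := fun h => hxy (by rw [h])
    exact key A hA B hBm this
  have hcard : G.card = (G.image f).card := (Finset.card_image_of_injOn hinj).symm
  rw [hcard, nuBiset]
  refine le_trans ?_ (Finset.le_sup (Finset.mem_powerset.mpr hsub))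
  rw [if_pos hdisj]
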